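/- Let A be a po-semiring satisfying condition (C2) in which DCC holds for elements of A (there is no infinite strictly descending chain of elements). Then every element of A other than 0 and 1 is a zero divisor, i.e., Z(A) = A \ {0, 1}. -/
import Mathlib


/-- A po-semiring: a commutative semiring equipped with a compatible partial order
such that 0 is the least and 1 is the greatest element. -/
class PoSemiring (A : Type*) extends CommSemiring A, PartialOrder A where
  add_right_mono : ∀ x y z : A, x ≤ y → x + z ≤ y + z
  mul_left_mono : ∀ x y z : A, (0 : A) ≤ x → y ≤ z → x * y ≤ x * z
  zero_le_elem : ∀ x : A, (0 : A) ≤ x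
  le_one_elem : ∀ x : A, x ≤ (1 : A)

/-- A maximal element of a po-semiring. -/
def IsMaximalElem {A : Type*} [PoSemiring A] (m : A) : Prop :=
  m ≠ 1 ∧ ∀ x : A, m ≤ x → x < 1 → m = x

/-- A prime element of a po-semiring. -/
def IsPrimeElem {A : Type*} [PoSemiring A] (p : A) : Prop :=
  p ≠ 1 ∧ ∀ x y : A, x * y ≤ p → x ≤ p ∨ y ≤ p

/-- The set `Z(A)` of nonzero zero divisors of a po-semiring. -/
def zdSet (A : Type*) [PoSemiring A] : Set A :=
  {a | a ≠ 0 ∧ ∃ b : A, b ≠ 0 ∧ a * b = 0}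

/-- Condition (C1): each non-nilpotent element lies above a nonzero idempotent
having an orthogonal idempotent complement. -/
def CondC1 (A : Type*) [PoSemiring A] : Prop :=
  ∀ u : A, ¬ IsNilpotent u →
    ∃ w v : A, w ≠ 0 ∧ w * w = w ∧ v * v = v ∧ w ≤ u ∧ w + v = 1 ∧ w * v = 0

/-- Condition (C2): each nonzero idempotent lies above a nonzero idempotent
having an orthogonal idempotent complement. -/
def CondC2 (A : Type*) [PoSemiring A] : Prop :=
  ∀ u : A, u ≠ 0 → u * u = u →
    ∃ w v : A, w ≠ 0 ∧ w * w = w ∧ v * v = v ∧ w ≤ u ∧ w + v = 1 ∧ w * v = 0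

/-- `A` contains no infinite set of orthogonal idempotents. -/
def NoInfiniteOrthogonalIdempotents (A : Type*) [PoSemiring A] : Prop :=
  ∀ S : Set A, (∀ e ∈ S, e ≠ 0 ∧ e * e = e) →
    (∀ e ∈ S, ∀ f ∈ S, e ≠ f → e * f = 0) → S.Finite

/-- DCC for elements: no infinite strictly descending chain. -/
def ElemDCC (A : Type*) [PoSemiring A] : Prop :=
  ¬ ∃ f : ℕ → A, ∀ n : ℕ, f (n + 1) < f n

/-- ACC for elements: no infinite strictly ascending chain. -/
def ElemACC (A : Type*) [PoSemiring A] : Prop :=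
  ¬ ∃ f : ℕ → A, ∀ n : ℕ, f n < f (n + 1)

section Aux

variable {A : Type*} [PoSemiring A]

lemma PS.zero_le (x : A) : 0 ≤ x := PoSemiring.zero_le_elem x
lemma PS.le_one (x : A) : x ≤ 1 := PoSemiring.le_one_elem x

lemma PS.mul_mono_right (x : A) {y z : A} (h : y ≤ z) : x * y ≤ x * z :=
  PoSemiring.mul_left_mono x y z (PS.zero_le x) h

lemma PS.mul_le_left (x y : A) : x * y ≤ x := by
  have := PS.mul_mono_right x (PS.le_one y)
  simpa using this

lemma PS.mul_le_right (x y : A) : x * y ≤ y := by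
  rw [mul_comm]; exact PS.mul_le_left y x

/-- An idempotent below `y` is absorbed by `y`. -/
lemma PS.idem_mul_of_le {x y : A} (hx : x * x = x) (hxy : x ≤ y) : x * y = x := by
  have h1 : x * y ≤ x := PS.mul_le_left x y
  have h2 : x ≤ x * y := by
    calc x = x * x := hx.symm
    _ ≤ x * y := PS.mul_mono_right x hxy
  exact le_antisymm h1 h2

lemma PS.wf (hdcc : ElemDCC A) : WellFounded ((· < ·) : A → A → Prop) := by
  rw [RelEmbedding.wellFounded_iff_isEmpty]
  constructor
  intro g
  exact hdcc ⟨fun n => g n, fun n => g.map_rel_iff.2 (Nat.lt_succ_self n)⟩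

lemma PS.exists_stable (hdcc : ElemDCC A) (c : A) :
    ∃ n : ℕ, c ^ (n + 2) = c ^ (n + 1) := by
  by_contra h
  push_neg at h
  apply hdcc
  refine ⟨fun n => c ^ (n + 1), fun n => ?_⟩
  refine lt_of_le_of_ne ?_ (h n)
  calc c ^ (n + 1 + 1) = c ^ (n + 1) * c := pow_succ c (n + 1)
  _ ≤ c ^ (n + 1) * 1 := PS.mul_mono_right _ (PS.le_one c)
  _ = c ^ (n + 1) := mul_one _

/-- Key lemma: for every idempotent `B`, either `a` has a nonzero annihilator,
or `a * B = B`. -/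
lemma PS.key (hC2 : CondC2 A) (hdcc : ElemDCC A) (a : A) :
    ∀ B : A, B * B = B → (∃ b : A, b ≠ 0 ∧ a * b = 0) ∨ a * B = B := by
  have hwf := PS.wf hdcc
  intro B
  refine hwf.induction (C := fun B => B * B = B →
    (∃ b : A, b ≠ 0 ∧ a * b = 0) ∨ a * B = B) B ?_
  clear B
  intro B IH hB
  by_cases hB0 : B = 0
  · right; simp [hB0]
  obtain ⟨n, hn⟩ := PS.exists_stable hdcc (a * B)
  set c : A := a * B with hc
  set e : A := c ^ (n + 1) with he
  have hec : e * c = e := by rw [he, ← pow_succ]; exact hn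
  have hepow : ∀ k : ℕ, e * c ^ k = e := by
    intro k
    induction k with
    | zero => simp
    | succ m ihm => rw [pow_succ, ← mul_assoc, ihm, hec]
  have hee : e * e = e := by rw [he]; exact hepow (n + 1)
  have hBc : B * c = c := by rw [hc, mul_comm a B, ← mul_assoc, hB]
  have hBcpow : ∀ k : ℕ, B * c ^ (k + 1) = c ^ (k + 1) := by
    intro k
    induction k with
    | zero => simpa using hBc
    | succ m ihm => rw [pow_succ, ← mul_assoc, ihm, ← pow_succ]
  by_cases he0 : e = 0
  · -- `c = a * B` is nilpotent: extract a nonzero annihilator of `a`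
    left
    have hex : ∃ k : ℕ, c ^ (k + 1) = 0 := ⟨n, by rw [← he]; exact he0⟩
    classical
    have hk : c ^ (Nat.find hex + 1) = 0 := Nat.find_spec hex
    rcases Nat.eq_zero_or_pos (Nat.find hex) with h0 | hpos
    · refine ⟨B, hB0, ?_⟩
      rw [h0] at hk
      simpa [hc] using hk
    · refine ⟨c ^ Nat.find hex, ?_, ?_⟩
      · obtain ⟨j, hj⟩ := Nat.exists_eq_add_of_lt hpos
        have : ¬ c ^ (j + 1) = 0 := Nat.find_min hex (by omega)
        rwa [show Nat.find hex = j + 1 by omega]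
      · calc a * c ^ Nat.find hex = a * (B * c ^ Nat.find hex) := by
              obtain ⟨j, hj⟩ := Nat.exists_eq_add_of_lt hpos
              rw [show Nat.find hex = j + 1 by omega, hBcpow j]
        _ = c * c ^ Nat.find hex := by rw [← mul_assoc, ← hc]
        _ = c ^ (Nat.find hex + 1) := by rw [pow_succ, mul_comm]
        _ = 0 := hk
  · -- the stabilized power `e` is a nonzero idempotent: apply (C2)
    obtain ⟨w, v, hw0, hww, hvv, hwle, hwv1, hwv0⟩ := hC2 e he0 hee
    have hecLe : e ≤ c := by
      rw [he, pow_succ]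
      exact PS.mul_le_right _ _
    have hcB : c ≤ B := by rw [hc]; exact PS.mul_le_right a B
    have hwc : w * c = w := by
      have hwe : w * e = w := PS.idem_mul_of_le hww hwle
      calc w * c = (w * e) * c := by rw [hwe]
      _ = w * (e * c) := by rw [mul_assoc]
      _ = w * e := by rw [hec]
      _ = w := hwe
    have hwB : w * B = w := PS.idem_mul_of_le hww (hwle.trans (hecLe.trans hcB))
    have hB'idem : (B * v) * (B * v) = B * v := by
      have h1 : (B * v) * (B * v) = (B * B) * (v * v) := by ring
      rw [h1, hB, hvv]
    have hB'lt : B * v < B := by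
      refine lt_of_le_of_ne (PS.mul_le_left B v) ?_
      intro hEq
      apply hw0
      calc w = w * B := hwB.symm
      _ = w * (B * v) := by rw [hEq]
      _ = (w * v) * B := by ring
      _ = 0 := by rw [hwv0, zero_mul]
    rcases IH (B * v) hB'lt hB'idem with h | h
    · exact Or.inl h
    · right
      have hcv : c * v = B * v := by
        calc c * v = a * (B * v) := by rw [hc, mul_assoc]
        _ = B * v := h
      have hcw : c * w = w := by rw [mul_comm]; exact hwc
      calc a * B = c := hc.symm
      _ = c * 1 := (mul_one c).symm
      _ = c * (w + v) := by rw [hwv1]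
      _ = c * w + c * v := by ring
      _ = w + B * v := by rw [hcw, hcv]
      _ = B * w + B * v := by rw [mul_comm B w, hwB]
      _ = B * (w + v) := by ring
      _ = B := by rw [hwv1, mul_one]

end Aux

theorem zdSet_eq_of_condC2_dcc {A : Type*} [PoSemiring A] [Nontrivial A]
    (hC2 : CondC2 A) (hdcc : ElemDCC A) :
    zdSet A = {a : A | a ≠ 0 ∧ a ≠ 1} := by
  ext a
  simp only [zdSet, Set.mem_setOf_eq]
  constructor
  · rintro ⟨ha0, b, hb0, hab⟩
    refine ⟨ha0, fun h => hb0 ?_⟩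
    rw [h, one_mul] at hab
    exact hab
  · rintro ⟨ha0, ha1⟩
    refine ⟨ha0, ?_⟩
    rcases PS.key hC2 hdcc a 1 (mul_one 1) with h | h
    · exact h
    · rw [mul_one] at h
      exact absurd h ha1
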